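/- Consider the stochastic discrete-time system with measurable safe set X ⊆ ℝⁿ and horizon N ∈ ℕ, and let X̃ ⊆ ℝⁿ be a measurable set containing X and all one-step reachable states from X. Suppose v : ℝⁿ → ℝ is measurable, the map θ ↦ v(f(x,θ)) is P-integrable for every x ∈ X, and there are constants M ∈ ℝ, α > 1 and β > 1 − α such that: (i) v(x) ≤ M for all x ∈ X̃; (ii) β + α·v(x) ≤ ∫_Θ v(f(x,θ)) dP(θ) for all x ∈ X; (iii) v(x) ≤ 1 for all x ∈ X̃ ∖ X. Then for every x₀ ∈ X, the finite-time safety probability satisfies P^∞({π : φ_π^{x₀}(k) ∈ X for all k ∈ {0,1,…,N}}) ≤ 1 − ((α^{N+1}·v(x₀) − M)(α − 1) + β(α^{N+1} − 1)) / ((α + β − 1)(α^{N+1} − 1)). -/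

import Mathlib

open MeasureTheory ProbabilityTheory

/-- Trajectory of the stochastic discrete-time system `x(l+1) = f(x(l), θ(l))`. -/
def traj {n : ℕ} {Θ : Type*} (f : (Fin n → ℝ) → Θ → (Fin n → ℝ))
    (x₀ : Fin n → ℝ) (π : ℕ → Θ) : ℕ → (Fin n → ℝ)
  | 0 => x₀
  | k + 1 => f (traj f x₀ π k) (π k)

/-!
Let `A k` be the event that the trajectory stays in `X` up to time `k`, `p k = P^∞(A k)` and
`u k = E[v(x k); A k]`. As `θ k` is independent of `A k` and `x k`, the drift condition gives
`E[v(x (k+1)); A k] ≥ β p k + α u k`; on `A k \ A (k+1)` the state `x (k+1)` lies in `X̃ \ X`,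
where `v ≤ m` with `m = min M 1`, so `E[v(x (k+1)); A k] ≤ u (k+1) + m (p k - p (k+1))`.
Since `p` is antitone, `s k = (α - 1)(u k - m p k) + (β + (α - 1) m) p N` then satisfies
`s (k+1) ≥ α s k` for `k < N`, and comparing `α ^ N s 0 ≤ s N` with
`E[v(x (N+1)); A N] ≤ M p N` yields the bound. All expectations are made finite by first
clipping `v` to `[-β / (α - 1), M]`, which preserves every hypothesis.
-/

open Set

theorem ProbabilityTheory.IndepFun.integral_comp_prodMk
    {Ω E F G : Type*} [MeasurableSpace Ω] [MeasurableSpace E] [MeasurableSpace F]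
    [NormedAddCommGroup G] [NormedSpace ℝ G] {μ : Measure Ω} [IsFiniteMeasure μ]
    {Y : Ω → E} {Z : Ω → F} (hYZ : IndepFun Y Z μ) (hY : Measurable Y) (hZ : Measurable Z)
    {Φ : E × F → G} (hΦ : StronglyMeasurable Φ) (hint : Integrable (fun ω => Φ (Y ω, Z ω)) μ) :
    ∫ ω, Φ (Y ω, Z ω) ∂μ = ∫ ω, ∫ z, Φ (Y ω, z) ∂(μ.map Z) ∂μ := by
  have hYZm : Measurable fun ω => (Y ω, Z ω) := hY.prodMk hZ
  have hlaw := hYZ.map_prod_eq_prod_map_map hY.aemeasurable hZ.aemeasurable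
  have hΦint : Integrable Φ ((μ.map Y).prod (μ.map Z)) := by
    rw [← hlaw]
    exact (integrable_map_measure hΦ.aestronglyMeasurable hYZm.aemeasurable).mpr hint
  calc ∫ ω, Φ (Y ω, Z ω) ∂μ = ∫ p, Φ p ∂(μ.map fun ω => (Y ω, Z ω)) :=
        (integral_map hYZm.aemeasurable hΦ.aestronglyMeasurable).symm
    _ = ∫ y, ∫ z, Φ (y, z) ∂(μ.map Z) ∂(μ.map Y) := by rw [hlaw, integral_prod Φ hΦint]
    _ = ∫ ω, ∫ z, Φ (Y ω, z) ∂(μ.map Z) ∂μ :=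
        integral_map hY.aemeasurable hΦint.integral_prod_left.aestronglyMeasurable

theorem setIntegral_le_of_le_const_real {α : Type*} [MeasurableSpace α] {μ : Measure α}
    [IsFiniteMeasure μ] {s : Set α} {F : α → ℝ} {c : ℝ} (hs : MeasurableSet s)
    (hF : IntegrableOn F s μ) (h : ∀ x ∈ s, F x ≤ c) : ∫ x in s, F x ∂μ ≤ c * μ.real s := by
  have := setIntegral_mono_on hF (integrableOn_const (measure_ne_top μ s)) hs h
  rwa [setIntegral_const, smul_eq_mul, mul_comm] at this

theorem safety_bound_of_recurrence {α β m M : ℝ} {u e p : ℕ → ℝ} {N : ℕ} (hα : 1 < α)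
    (hc : 0 ≤ β + (α - 1) * m) (hmM : m ≤ M) (hp : Antitone p) (hp0 : p 0 = 1)
    (hdrift : ∀ k, β * p k + α * u k ≤ e k) (hexit : ∀ k, e k ≤ u (k + 1) + m * (p k - p (k + 1)))
    (hend : e N ≤ M * p N) :
    p N * ((β + (α - 1) * m) * (α ^ (N + 1) - 1))
      ≤ (α - 1) * (α ^ (N + 1) * (m - u 0) + M - m) := by
  have hα1 : 0 ≤ α - 1 := by linarith
  have hgrow : ∀ k ≤ N, α ^ k * ((α - 1) * (u 0 - m) + (β + (α - 1) * m) * p N)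
      ≤ (α - 1) * (u k - m * p k) + (β + (α - 1) * m) * p N := by
    intro k
    induction k with
    | zero => simp [hp0]
    | succ k ih =>
      intro hk
      have hstep : (α - 1) * (α * u k + (β - m) * p k) ≤ (α - 1) * (u (k + 1) - m * p (k + 1)) :=
        mul_le_mul_of_nonneg_left (by linarith [hdrift k, hexit k]) hα1
      have hpN := mul_le_mul_of_nonneg_left (hp (show k ≤ N by omega)) (mul_nonneg hα1 hc)
      have ih' := mul_le_mul_of_nonneg_left (ih (by omega)) (by linarith : 0 ≤ α)
      linear_combination ih' + hstep + hpN
  have hpN1 : p N ≤ 1 := hp0 ▸ hp (Nat.zero_le N)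
  have hN := mul_le_mul_of_nonneg_left (hgrow N le_rfl) (by linarith : 0 ≤ α)
  have hlast := mul_le_mul_of_nonneg_left (hdrift N |>.trans hend) hα1
  have hMm := mul_le_mul_of_nonneg_left hpN1 (mul_nonneg hα1 (sub_nonneg.mpr hmM))
  linear_combination hN + hlast + hMm

section Past

variable {Θ : Type*} [mΘ : MeasurableSpace Θ]

abbrev pastMeasurableSpace (k : ℕ) : MeasurableSpace (ℕ → Θ) :=
  ⨆ i ∈ Iio k, mΘ.comap fun π => π i

theorem pastMeasurableSpace_le (k : ℕ) : pastMeasurableSpace (Θ := Θ) k ≤ MeasurableSpace.pi :=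
  iSup₂_le fun i _ => (measurable_pi_apply i).comap_le

theorem measurable_apply_pastMeasurableSpace {i k : ℕ} (hik : i < k) :
    Measurable[pastMeasurableSpace k] fun π : ℕ → Θ => π i :=
  Measurable.of_comap_le
    (le_iSup₂ (f := fun j (_ : j ∈ Iio k) => mΘ.comap fun π : ℕ → Θ => π j) i hik)

theorem ProbabilityTheory.iIndepFun.indepFun_apply_of_measurable_pastMeasurableSpace
    {E : Type*} [MeasurableSpace E] {μ : Measure (ℕ → Θ)}
    (h_indep : iIndepFun (fun i (π : ℕ → Θ) => π i) μ) {k : ℕ}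
    {Y : (ℕ → Θ) → E} (hY : Measurable[pastMeasurableSpace k] Y) :
    IndepFun Y (fun π => π k) μ := by
  have h := indep_iSup_of_disjoint (fun i => (measurable_pi_apply i).comap_le)
    ((iIndepFun_iff_iIndep _ _ μ).mp h_indep) (S := Iio k) (T := {k}) (by simp)
  rw [IndepFun_iff_Indep]
  exact indep_of_indep_of_le_right (indep_of_indep_of_le_left h hY.comap_le)
    (le_iSup₂ (f := fun j (_ : j ∈ ({k} : Set ℕ)) => mΘ.comap fun π : ℕ → Θ => π j) k rfl)

theorem ProbabilityTheory.iIndepFun.integral_comp_apply {E : Type*} [MeasurableSpace E]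
    {P : Measure Θ} {μ : Measure (ℕ → Θ)} [IsFiniteMeasure μ]
    (h_indep : iIndepFun (fun i (π : ℕ → Θ) => π i) μ) (h_law : ∀ i, μ.map (fun π => π i) = P)
    {k : ℕ} {Y : (ℕ → Θ) → E} (hY : Measurable[pastMeasurableSpace k] Y)
    {Φ : E × Θ → ℝ} (hΦ : Measurable Φ) (hint : Integrable (fun π => Φ (Y π, π k)) μ) :
    ∫ π, Φ (Y π, π k) ∂μ = ∫ π, ∫ θ, Φ (Y π, θ) ∂P ∂μ := by
  rw [← h_law k]
  exact (h_indep.indepFun_apply_of_measurable_pastMeasurableSpace hY).integral_comp_prodMk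
    (hY.mono (pastMeasurableSpace_le k) le_rfl) (measurable_pi_apply k) hΦ.stronglyMeasurable hint

end Past

section SafeEvent

variable {n : ℕ} {Θ : Type*} {f : (Fin n → ℝ) → Θ → (Fin n → ℝ)} {X Xt : Set (Fin n → ℝ)}
  (x₀ : Fin n → ℝ)

def safeEvent (f : (Fin n → ℝ) → Θ → (Fin n → ℝ)) (X : Set (Fin n → ℝ)) (x₀ : Fin n → ℝ)
    (k : ℕ) : Set (ℕ → Θ) :=
  {π | ∀ j ≤ k, traj f x₀ π j ∈ X}

theorem safeEvent_zero (hx₀ : x₀ ∈ X) : safeEvent f X x₀ 0 = univ :=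
  eq_univ_of_forall fun _ j hj => by rwa [Nat.le_zero.mp hj]

theorem safeEvent_anti : Antitone (safeEvent f X x₀) :=
  fun _ _ hkl _ hπ j hj => hπ j (hj.trans hkl)

theorem traj_succ_mem_of_mem_safeEvent (hreach : ∀ x ∈ X, ∀ θ, f x θ ∈ Xt) {k : ℕ} {π : ℕ → Θ}
    (hπ : π ∈ safeEvent f X x₀ k) : traj f x₀ π (k + 1) ∈ Xt :=
  hreach _ (hπ k le_rfl) _

theorem traj_succ_mem_diff_of_mem_diff (hreach : ∀ x ∈ X, ∀ θ, f x θ ∈ Xt) {k : ℕ} {π : ℕ → Θ}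
    (hπ : π ∈ safeEvent f X x₀ k \ safeEvent f X x₀ (k + 1)) : traj f x₀ π (k + 1) ∈ Xt \ X := by
  refine ⟨traj_succ_mem_of_mem_safeEvent x₀ hreach hπ.1, fun hX => hπ.2 fun j hj => ?_⟩
  rcases Nat.le_succ_iff.mp hj with hj | rfl
  exacts [hπ.1 j hj, hX]

variable [MeasurableSpace Θ]

theorem measurable_traj_pastMeasurableSpace (hf : Measurable fun p : (Fin n → ℝ) × Θ => f p.1 p.2)
    {j k : ℕ} (hjk : j ≤ k) : Measurable[pastMeasurableSpace k] fun π => traj f x₀ π j := by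
  induction j with
  | zero => exact measurable_const
  | succ j ih =>
    exact hf.comp ((ih (by omega)).prodMk (measurable_apply_pastMeasurableSpace hjk))

theorem measurable_traj (hf : Measurable fun p : (Fin n → ℝ) × Θ => f p.1 p.2) (k : ℕ) :
    Measurable fun π => traj f x₀ π k :=
  (measurable_traj_pastMeasurableSpace x₀ hf le_rfl).mono (pastMeasurableSpace_le k) le_rfl

theorem measurableSet_safeEvent_pastMeasurableSpace
    (hf : Measurable fun p : (Fin n → ℝ) × Θ => f p.1 p.2) (hX : MeasurableSet X) (k : ℕ) :
    MeasurableSet[pastMeasurableSpace k] (safeEvent f X x₀ k) := by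
  simp only [safeEvent, ofPred_forall]
  exact .iInter fun j => .iInter fun hj => measurable_traj_pastMeasurableSpace x₀ hf hj hX

theorem measurableSet_safeEvent (hf : Measurable fun p : (Fin n → ℝ) × Θ => f p.1 p.2)
    (hX : MeasurableSet X) (k : ℕ) : MeasurableSet (safeEvent f X x₀ k) :=
  pastMeasurableSpace_le k _ (measurableSet_safeEvent_pastMeasurableSpace x₀ hf hX k)

end SafeEvent

section Barrier

variable {n : ℕ} {Θ : Type*} [MeasurableSpace Θ] {P : Measure Θ}
  {Pinf : Measure (ℕ → Θ)} [IsProbabilityMeasure Pinf] {f : (Fin n → ℝ) → Θ → (Fin n → ℝ)}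
  {X Xt : Set (Fin n → ℝ)} {w : (Fin n → ℝ) → ℝ} {C : ℝ} (x₀ : Fin n → ℝ)

theorem setIntegral_traj_succ (h_indep : iIndepFun (fun i (π : ℕ → Θ) => π i) Pinf)
    (h_law : ∀ i, Pinf.map (fun π => π i) = P)
    (hf : Measurable fun p : (Fin n → ℝ) × Θ => f p.1 p.2) {h : (Fin n → ℝ) → ℝ}
    (hh : Measurable h) {k : ℕ} (hint : Integrable (fun π => h (traj f x₀ π (k + 1))) Pinf)
    {A : Set (ℕ → Θ)} (hA : MeasurableSet[pastMeasurableSpace k] A) :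
    ∫ π in A, h (traj f x₀ π (k + 1)) ∂Pinf = ∫ π in A, ∫ θ, h (f (traj f x₀ π k) θ) ∂P ∂Pinf := by
  have hAm : MeasurableSet A := pastMeasurableSpace_le k _ hA
  have hmul (F : (ℕ → Θ) → ℝ) : (fun π => A.indicator 1 π * F π) = A.indicator F :=
    funext fun π => by by_cases hπ : π ∈ A <;> simp [hπ]
  have hY : Measurable[pastMeasurableSpace k]
      fun π => (A.indicator (1 : (ℕ → Θ) → ℝ) π, traj f x₀ π k) :=
    (Measurable.indicator measurable_const hA).prodMk
      (measurable_traj_pastMeasurableSpace x₀ hf le_rfl)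
  have key := h_indep.integral_comp_apply h_law hY (Φ := fun p => p.1.1 * h (f p.1.2 p.2))
    (measurable_fst.fst.mul (hh.comp (hf.comp (measurable_fst.snd.prodMk measurable_snd))))
    (by rw [hmul fun π => h (f (traj f x₀ π k) (π k))]; exact hint.indicator hAm)
  simp only [integral_const_mul] at key
  rwa [hmul, hmul, integral_indicator hAm, integral_indicator hAm] at key

theorem integrable_comp_traj (hf : Measurable fun p : (Fin n → ℝ) × Θ => f p.1 p.2)
    (hw : Measurable w) (hwC : ∀ x, |w x| ≤ C) (k : ℕ) :
    Integrable (fun π => w (traj f x₀ π k)) Pinf :=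
  .of_bound (hw.comp (measurable_traj x₀ hf k)).aestronglyMeasurable C (ae_of_all _ fun _ => hwC _)

theorem drift_le_setIntegral_traj_succ [IsProbabilityMeasure P]
    (h_indep : iIndepFun (fun i (π : ℕ → Θ) => π i) Pinf)
    (h_law : ∀ i, Pinf.map (fun π => π i) = P)
    (hf : Measurable fun p : (Fin n → ℝ) × Θ => f p.1 p.2) (hX : MeasurableSet X)
    (hw : Measurable w) (hwC : ∀ x, |w x| ≤ C) {α β : ℝ}
    (hdrift : ∀ x ∈ X, β + α * w x ≤ ∫ θ, w (f x θ) ∂P) (k : ℕ) :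
    β * Pinf.real (safeEvent f X x₀ k) + α * ∫ π in safeEvent f X x₀ k, w (traj f x₀ π k) ∂Pinf
      ≤ ∫ π in safeEvent f X x₀ k, w (traj f x₀ π (k + 1)) ∂Pinf := by
  have hA := measurableSet_safeEvent x₀ hf hX k
  have hu := integrable_comp_traj (Pinf := Pinf) x₀ hf hw hwC k
  have hg : Integrable (fun π => ∫ θ, w (f (traj f x₀ π k) θ) ∂P) Pinf := by
    refine .of_bound (((hw.comp hf).stronglyMeasurable.integral_prod_right').comp_measurable
      (measurable_traj x₀ hf k)).aestronglyMeasurable C (ae_of_all _ fun π => ?_)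
    simpa using norm_integral_le_of_norm_le_const (μ := P)
      (f := fun θ => w (f (traj f x₀ π k) θ)) (ae_of_all _ fun θ => hwC _)
  rw [setIntegral_traj_succ x₀ h_indep h_law hf hw (integrable_comp_traj x₀ hf hw hwC _)
    (measurableSet_safeEvent_pastMeasurableSpace x₀ hf hX k)]
  calc β * Pinf.real (safeEvent f X x₀ k) + α * ∫ π in safeEvent f X x₀ k, w (traj f x₀ π k) ∂Pinf
      = ∫ π in safeEvent f X x₀ k, (β + α * w (traj f x₀ π k)) ∂Pinf := by
        rw [integral_add (integrable_const β).integrableOn (hu.const_mul α).integrableOn,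
          setIntegral_const, integral_const_mul, smul_eq_mul, mul_comm]
    _ ≤ ∫ π in safeEvent f X x₀ k, ∫ θ, w (f (traj f x₀ π k) θ) ∂P ∂Pinf :=
        setIntegral_mono_on ((integrable_const β).add (hu.const_mul α)).integrableOn
          hg.integrableOn hA fun π hπ => hdrift _ (hπ k le_rfl)

theorem setIntegral_traj_succ_le_add (hf : Measurable fun p : (Fin n → ℝ) × Θ => f p.1 p.2)
    (hX : MeasurableSet X) (hreach : ∀ x ∈ X, ∀ θ, f x θ ∈ Xt) (hw : Measurable w)
    (hwC : ∀ x, |w x| ≤ C) {m : ℝ} (hm : ∀ x ∈ Xt \ X, w x ≤ m) (k : ℕ) :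
    ∫ π in safeEvent f X x₀ k, w (traj f x₀ π (k + 1)) ∂Pinf
      ≤ ∫ π in safeEvent f X x₀ (k + 1), w (traj f x₀ π (k + 1)) ∂Pinf
        + m * (Pinf.real (safeEvent f X x₀ k) - Pinf.real (safeEvent f X x₀ (k + 1))) := by
  have hsub := safeEvent_anti (f := f) (X := X) x₀ (Nat.le_add_right k 1)
  have hA := measurableSet_safeEvent x₀ hf hX
  have hint (s : Set (ℕ → Θ)) : IntegrableOn (fun π => w (traj f x₀ π (k + 1))) s Pinf :=
    (integrable_comp_traj x₀ hf hw hwC _).integrableOn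
  rw [← measureReal_sdiff hsub (hA _), ← union_sdiff_cancel hsub,
    setIntegral_union disjoint_sdiff_right ((hA k).diff (hA _)) (hint _) (hint _),
    union_sdiff_cancel hsub]
  exact add_le_add le_rfl (setIntegral_le_of_le_const_real ((hA k).diff (hA _)) (hint _)
    fun π hπ => hm _ (traj_succ_mem_diff_of_mem_diff x₀ hreach hπ))

theorem setIntegral_traj_succ_le_mul (hf : Measurable fun p : (Fin n → ℝ) × Θ => f p.1 p.2)
    (hX : MeasurableSet X) (hreach : ∀ x ∈ X, ∀ θ, f x θ ∈ Xt) (hw : Measurable w)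
    (hwC : ∀ x, |w x| ≤ C) {M : ℝ} (hM : ∀ x ∈ Xt, w x ≤ M) (k : ℕ) :
    ∫ π in safeEvent f X x₀ k, w (traj f x₀ π (k + 1)) ∂Pinf
      ≤ M * Pinf.real (safeEvent f X x₀ k) :=
  setIntegral_le_of_le_const_real (measurableSet_safeEvent x₀ hf hX k)
    (integrable_comp_traj x₀ hf hw hwC _).integrableOn
    fun _ hπ => hM _ (traj_succ_mem_of_mem_safeEvent x₀ hreach hπ)

theorem measureReal_safeEvent_mul_le_of_bounded [IsProbabilityMeasure P]
    (h_indep : iIndepFun (fun i (π : ℕ → Θ) => π i) Pinf) (h_law : ∀ i, Pinf.map (fun π => π i) = P)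
    (hf : Measurable fun p : (Fin n → ℝ) × Θ => f p.1 p.2) (hX : MeasurableSet X)
    (hreach : ∀ x ∈ X, ∀ θ, f x θ ∈ Xt) (hw : Measurable w) (hwC : ∀ x, |w x| ≤ C)
    {α β m M : ℝ} (hα : 1 < α) (hc : 0 ≤ β + (α - 1) * m) (hmM : m ≤ M)
    (hM : ∀ x ∈ Xt, w x ≤ M) (hm : ∀ x ∈ Xt \ X, w x ≤ m)
    (hdrift : ∀ x ∈ X, β + α * w x ≤ ∫ θ, w (f x θ) ∂P) (hx₀ : x₀ ∈ X) (N : ℕ) :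
    Pinf.real (safeEvent f X x₀ N) * ((β + (α - 1) * m) * (α ^ (N + 1) - 1))
      ≤ (α - 1) * (α ^ (N + 1) * (m - w x₀) + M - m) := by
  have hu₀ : ∫ π in safeEvent f X x₀ 0, w (traj f x₀ π 0) ∂Pinf = w x₀ := by
    simp [safeEvent_zero x₀ hx₀, traj]
  have := safety_bound_of_recurrence (p := fun k => Pinf.real (safeEvent f X x₀ k)) hα hc hmM
    (fun _ _ hkl => measureReal_mono (safeEvent_anti x₀ hkl)) (by simp [safeEvent_zero x₀ hx₀])
    (drift_le_setIntegral_traj_succ x₀ h_indep h_law hf hX hw hwC hdrift)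
    (setIntegral_traj_succ_le_add x₀ hf hX hreach hw hwC hm)
    (setIntegral_traj_succ_le_mul x₀ hf hX hreach hw hwC hM N)
  rwa [hu₀] at this

theorem measureReal_safeEvent_mul_le [IsProbabilityMeasure P]
    (h_indep : iIndepFun (fun i (π : ℕ → Θ) => π i) Pinf) (h_law : ∀ i, Pinf.map (fun π => π i) = P)
    (hf : Measurable fun p : (Fin n → ℝ) × Θ => f p.1 p.2) (hX : MeasurableSet X)
    (hXsub : X ⊆ Xt) (hreach : ∀ x ∈ X, ∀ θ, f x θ ∈ Xt) {v : (Fin n → ℝ) → ℝ}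
    (hv : Measurable v) (hint : ∀ x ∈ X, Integrable (fun θ => v (f x θ)) P)
    {α β m M : ℝ} (hα : 1 < α) (hc : 0 ≤ β + (α - 1) * m) (hmM : m ≤ M)
    (hM : ∀ x ∈ Xt, v x ≤ M) (hm : ∀ x ∈ Xt \ X, v x ≤ m)
    (hdrift : ∀ x ∈ X, β + α * v x ≤ ∫ θ, v (f x θ) ∂P) (hx₀ : x₀ ∈ X) (N : ℕ) :
    Pinf.real (safeEvent f X x₀ N) * ((β + (α - 1) * m) * (α ^ (N + 1) - 1))
      ≤ (α - 1) * (α ^ (N + 1) * (m - v x₀) + M - m) := by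
  have hα1 : 0 < α - 1 := by linarith
  -- clipping `v` from below at the fixed point `ℓ` of `t ↦ β + α * t` keeps the drift condition
  obtain ⟨ℓ, hℓ, hℓm⟩ : ∃ ℓ, β + α * ℓ = ℓ ∧ ℓ ≤ m :=
    ⟨-β / (α - 1), by field_simp; ring, by rw [div_le_iff₀ hα1]; linarith⟩
  set w := fun x => max (min (v x) M) ℓ
  have hw : Measurable w := (hv.min measurable_const).max measurable_const
  have hwM (x) : w x ≤ M := max_le (min_le_right _ _) (hℓm.trans hmM)
  have hvw : ∀ x ∈ Xt, v x ≤ w x := fun x hx => le_max_of_le_left (le_min le_rfl (hM x hx))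
  have hwdrift : ∀ x ∈ X, β + α * w x ≤ ∫ θ, w (f x θ) ∂P := by
    intro x hx
    have hwint : Integrable (fun θ => w (f x θ)) P :=
      .of_bound (hw.comp (hf.comp measurable_prodMk_left)).aestronglyMeasurable _
        (ae_of_all _ fun θ => abs_le_max_abs_abs (le_max_right _ _) (hwM _))
    change β + α * max (min (v x) M) ℓ ≤ _
    rcases le_total (min (v x) M) ℓ with h | h
    · rw [max_eq_right h, hℓ]
      simpa using integral_mono (integrable_const ℓ) hwint fun θ => le_max_right _ _
    · rw [max_eq_left h]
      calc β + α * min (v x) M ≤ β + α * v x := by gcongr; exact min_le_left _ _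
        _ ≤ ∫ θ, v (f x θ) ∂P := hdrift x hx
        _ ≤ ∫ θ, w (f x θ) ∂P :=
          integral_mono (hint x hx) hwint fun θ => hvw _ (hreach x hx θ)
  calc _ ≤ (α - 1) * (α ^ (N + 1) * (m - w x₀) + M - m) :=
        measureReal_safeEvent_mul_le_of_bounded x₀ h_indep h_law hf hX hreach hw
          (fun x => abs_le_max_abs_abs (le_max_right _ _) (hwM x)) hα hc hmM (fun x _ => hwM x)
          (fun x hx => max_le ((min_le_left _ _).trans (hm x hx)) hℓm) hwdrift hx₀ N
    _ ≤ (α - 1) * (α ^ (N + 1) * (m - v x₀) + M - m) := by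
        gcongr; exact hvw x₀ (hXsub hx₀)

end Barrier

theorem finite_time_safety_upper_bound_bounded_fn_general
    {n : ℕ} {Θ : Type*} [MeasurableSpace Θ]
    (P : Measure Θ) [IsProbabilityMeasure P]
    -- `Pinf` is the i.i.d. product measure `P^∞` on disturbance signals:
    (Pinf : Measure (ℕ → Θ)) [IsProbabilityMeasure Pinf]
    (h_indep : iIndepFun (m := fun _ : ℕ => ‹MeasurableSpace Θ›) (fun i (π : ℕ → Θ) => π i) Pinf)
    (h_law : ∀ i : ℕ, Pinf.map (fun π : ℕ → Θ => π i) = P)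
    (f : (Fin n → ℝ) → Θ → (Fin n → ℝ))
    (hf : Measurable (fun p : (Fin n → ℝ) × Θ => f p.1 p.2))
    (X Xt : Set (Fin n → ℝ)) (hX : MeasurableSet X)
    (hXsub : X ⊆ Xt)
    (hreach : ∀ x ∈ X, ∀ θ : Θ, f x θ ∈ Xt)
    (N : ℕ)
    (v : (Fin n → ℝ) → ℝ) (hv : Measurable v)
    (hint : ∀ x ∈ X, Integrable (fun θ => v (f x θ)) P)
    (M α β : ℝ) (hα : 1 < α) (hβ : 1 - α < β)
    (h1 : ∀ x ∈ Xt, v x ≤ M)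
    (h2 : ∀ x ∈ X, β + α * v x ≤ ∫ θ, v (f x θ) ∂P)
    (h3 : ∀ x ∈ Xt \ X, v x ≤ 1)
    (x₀ : Fin n → ℝ) (hx₀ : x₀ ∈ X) :
    (Pinf {π : ℕ → Θ | ∀ k ≤ N, traj f x₀ π k ∈ X}).toReal
      ≤ 1 - ((α ^ (N + 1) * v x₀ - M) * (α - 1) + β * (α ^ (N + 1) - 1))
            / ((α + β - 1) * (α ^ (N + 1) - 1)) := by
  have hα1 : 0 < α - 1 := by linarith
  have ha : 0 < α ^ (N + 1) - 1 := sub_pos.mpr (one_lt_pow₀ hα N.succ_ne_zero)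
  have hp : Pinf.real (safeEvent f X x₀ N) ≤ 1 := measureReal_le_one
  have hbound (m : ℝ) (hc : 0 ≤ β + (α - 1) * m) (hmM : m ≤ M) (hm : ∀ x ∈ Xt \ X, v x ≤ m) :=
    measureReal_safeEvent_mul_le x₀ h_indep h_law hf hX hXsub hreach hv hint hα hc hmM h1 hm h2
      hx₀ N
  have key : Pinf.real (safeEvent f X x₀ N) * ((α + β - 1) * (α ^ (N + 1) - 1))
      ≤ (α - 1) * (α ^ (N + 1) * (1 - v x₀) + M - 1) := by
    rcases le_total 1 M with hM | hM
    · convert hbound 1 (by linarith) hM h3 using 3; ring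
    -- for `M ≤ 1` the bound with threshold `M` is sharper and implies the one with threshold `1`
    have hMbound : Pinf.real (safeEvent f X x₀ N) * ((β + (α - 1) * M) * (α ^ (N + 1) - 1))
        ≤ (α - 1) * (α ^ (N + 1) * (M - v x₀) + M - M) := by
      rcases le_total 0 (β + (α - 1) * M) with hc | hc
      · exact hbound M hc le_rfl fun x hx => h1 x hx.1
      · have hv₀ : 0 ≤ M - v x₀ := sub_nonneg.mpr (h1 x₀ (hXsub hx₀))
        nlinarith [measureReal_nonneg (μ := Pinf) (s := safeEvent f X x₀ N),
          mul_nonpos_of_nonpos_of_nonneg hc ha.le, mul_nonneg hα1.le (mul_nonneg ha.le hv₀)]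
    nlinarith [mul_le_mul_of_nonneg_right hp
      (mul_nonneg (mul_nonneg hα1.le (sub_nonneg.mpr hM)) ha.le)]
  change Pinf.real (safeEvent f X x₀ N) ≤ _
  rw [le_sub_comm, div_le_iff₀ (mul_pos (by linarith) ha)]
  linarith

/-- Barrier-like condition with a bounded auxiliary function (Theorem 2 of
Xue et al. 2024, case `α > 1`): upper bound on the finite-time safety probability. -/
theorem finite_time_safety_upper_bound_bounded_fn
    {n : ℕ} {Θ : Type*} [MeasurableSpace Θ]
    (P : Measure Θ) [IsProbabilityMeasure P]
    -- `Pinf` is the i.i.d. product measure `P^∞` on disturbance signals: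
    (Pinf : Measure (ℕ → Θ)) [IsProbabilityMeasure Pinf]
    (h_indep : iIndepFun (m := fun _ : ℕ => ‹MeasurableSpace Θ›) (fun i (π : ℕ → Θ) => π i) Pinf)
    (h_law : ∀ i : ℕ, Pinf.map (fun π : ℕ → Θ => π i) = P)
    (f : (Fin n → ℝ) → Θ → (Fin n → ℝ))
    (hf : Measurable (fun p : (Fin n → ℝ) × Θ => f p.1 p.2))
    (X Xt : Set (Fin n → ℝ)) (hX : MeasurableSet X) (hXt : MeasurableSet Xt)
    (hXsub : X ⊆ Xt)
    (hreach : ∀ x ∈ X, ∀ θ : Θ, f x θ ∈ Xt)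
    (N : ℕ)
    (v : (Fin n → ℝ) → ℝ) (hv : Measurable v)
    (hint : ∀ x ∈ X, Integrable (fun θ => v (f x θ)) P)
    (M α β : ℝ) (hα : 1 < α) (hβ : 1 - α < β)
    (h1 : ∀ x ∈ Xt, v x ≤ M)
    (h2 : ∀ x ∈ X, β + α * v x ≤ ∫ θ, v (f x θ) ∂P)
    (h3 : ∀ x ∈ Xt \ X, v x ≤ 1)
    (x₀ : Fin n → ℝ) (hx₀ : x₀ ∈ X) :
    (Pinf {π : ℕ → Θ | ∀ k ≤ N, traj f x₀ π k ∈ X}).toReal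
      ≤ 1 - ((α ^ (N + 1) * v x₀ - M) * (α - 1) + β * (α ^ (N + 1) - 1))
            / ((α + β - 1) * (α ^ (N + 1) - 1)) :=
  finite_time_safety_upper_bound_bounded_fn_general P Pinf h_indep h_law f hf X Xt hX hXsub hreach N
    v hv hint M α β hα hβ h1 h2 h3 x₀ hx₀
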